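/- arXiv:1211.5406 — 2 statements merged into one kernel-verified Lean document; each statement's English description precedes it below -/
import Mathlib

section
/- The optimal value of the doubly nonnegative relaxation (DNNP) of the binary quadratic program equals the optimal value of the semidefinite relaxation (SDR2), provided both feasible sets are nonempty: Opt(SDR2) = Opt(DNNP). -/
open Matrix

/-- The all-ones vector. -/
def allOnes (n : ℕ) : Fin n → ℝ := fun _ => 1

/-- Feasibility for the relaxation (SDR2). -/
def FeasSDR2 {n m : ℕ} (a : Fin m → Fin n → ℝ) (b : Fin m → ℝ)
    (x : Fin n → ℝ) (X : Matrix (Fin n) (Fin n) ℝ) : Prop :=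
  (∀ i, a i ⬝ᵥ x = b i) ∧
  (∀ i, a i ⬝ᵥ X.mulVec (a i) = (b i) ^ 2) ∧
  (∀ i, X i i = 1) ∧
  (∀ i j : Fin n, i ≤ j → 1 - x i - x j + X i j ≥ 0) ∧
  (fromBlocks (1 : Matrix Unit Unit ℝ) (replicateRow Unit x) (replicateCol Unit x) X).PosSemidef

/-- Feasibility for the doubly nonnegative relaxation (DNNP). -/
def FeasDNNP {n m : ℕ} (a : Fin m → Fin n → ℝ) (b : Fin m → ℝ)
    (z : Fin n → ℝ) (Z : Matrix (Fin n) (Fin n) ℝ) : Prop :=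
  (∀ i, 2 * (a i ⬝ᵥ z) = a i ⬝ᵥ allOnes n - b i) ∧
  (∀ i, 4 * (a i ⬝ᵥ Z.mulVec (a i)) = (a i ⬝ᵥ allOnes n - b i) ^ 2) ∧
  (∀ i, Z i i = z i) ∧
  (fromBlocks (1 : Matrix Unit Unit ℝ) (replicateRow Unit z) (replicateCol Unit z) Z).PosSemidef ∧
  (∀ p q, 0 ≤ fromBlocks (1 : Matrix Unit Unit ℝ) (replicateRow Unit z) (replicateCol Unit z) Z p q)

/-!
The substitution `z = (e - x)/2`, `Z = (eeᵀ - exᵀ - xeᵀ + X)/4` is the lift of the affine map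
`x ↦ d + t x` (with `d = e/2`, `t = -1/2`) to moment matrices. On `[[1, xᵀ], [x, X]]` it acts
by congruence with `[[1, 0], [d, t I]]`, so it preserves positive semidefiniteness, and it
multiplies `aᵀXa - (aᵀx)²` by `t²`, so the quadratic equality constraints correspond. The bounds
`1 - xᵢ - xⱼ + Xᵢⱼ ≥ 0` become `Zᵢⱼ ≥ 0`, and for symmetric `Q` the objectives agree. The inverse
substitution is the lift with `d = e`, `t = -2`, so the two sets of objective values coincide.
-/

section AffineMoment

variable {ι R : Type*} [CommRing R]

def momentMatrix (x : ι → R) (X : Matrix ι ι R) : Matrix (Unit ⊕ ι) (Unit ⊕ ι) R :=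
  fromBlocks 1 (replicateRow Unit x) (replicateCol Unit x) X

/-- If `X` stands for `x xᵀ`, this is `(d + t x)(d + t x)ᵀ`. -/
def affineSecondMoment (d : ι → R) (t : R) (x : ι → R) (X : Matrix ι ι R) : Matrix ι ι R :=
  vecMulVec d d + t • (vecMulVec d x + vecMulVec x d) + t ^ 2 • X

@[simp]
lemma affineSecondMoment_apply (d : ι → R) (t : R) (x : ι → R) (X : Matrix ι ι R) (i j : ι) :
    affineSecondMoment d t x X i j = d i * d j + t * (d i * x j + x i * d j) + t ^ 2 * X i j := by
  simp only [affineSecondMoment, Matrix.add_apply, Matrix.smul_apply, vecMulVec_apply, smul_eq_mul,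
    mul_add]

lemma Matrix.IsSymm.affineSecondMoment {X : Matrix ι ι R} (hX : X.IsSymm) (d : ι → R) (t : R)
    (x : ι → R) : (affineSecondMoment d t x X).IsSymm := by
  ext i j
  simp only [transpose_apply, affineSecondMoment_apply, hX.apply i j]
  ring

variable [Fintype ι]

lemma momentMatrix_affine [DecidableEq ι] (d : ι → R) (t : R) (x : ι → R) (X : Matrix ι ι R) :
    momentMatrix (d + t • x) (affineSecondMoment d t x X) =
      fromBlocks 1 0 (replicateCol Unit d) (t • 1) * momentMatrix x X *
        (fromBlocks 1 0 (replicateCol Unit d) (t • 1))ᵀ := by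
  ext (_ | i) (_ | j) <;>
    simp [momentMatrix, fromBlocks_multiply, fromBlocks_transpose, Matrix.add_mul, ← vecMulVec_eq,
      vecMulVec_apply]
  ring

lemma Matrix.PosSemidef.momentMatrix_affine [DecidableEq ι] [PartialOrder R] [StarRing R]
    [TrivialStar R] {x : ι → R} {X : Matrix ι ι R} (h : (momentMatrix x X).PosSemidef)
    (d : ι → R) (t : R) :
    (momentMatrix (d + t • x) (affineSecondMoment d t x X)).PosSemidef := by
  rw [_root_.momentMatrix_affine, ← conjTranspose_eq_transpose_of_trivial]
  exact h.mul_mul_conjTranspose_same _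

lemma dotProduct_affineSecondMoment_mulVec_sub_sq (a d : ι → R) (t : R) (x : ι → R)
    (X : Matrix ι ι R) :
    a ⬝ᵥ (affineSecondMoment d t x X *ᵥ a) - (a ⬝ᵥ (d + t • x)) ^ 2 =
      t ^ 2 * (a ⬝ᵥ (X *ᵥ a) - (a ⬝ᵥ x) ^ 2) := by
  simp only [affineSecondMoment, add_mulVec, smul_mulVec, vecMulVec_mulVec, op_smul_eq_smul,
    dotProduct_add, dotProduct_smul, smul_eq_mul, dotProduct_comm a d, dotProduct_comm a x]
  ring

lemma trace_mul_affineSecondMoment {Q : Matrix ι ι R} (hQ : Q.IsSymm) (d : ι → R) (t : R)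
    (x : ι → R) (X : Matrix ι ι R) :
    (Q * affineSecondMoment d t x X).trace =
      d ⬝ᵥ (Q *ᵥ d) + 2 * t * (x ⬝ᵥ (Q *ᵥ d)) + t ^ 2 * (Q * X).trace := by
  have hxd : Q *ᵥ x ⬝ᵥ d = x ⬝ᵥ (Q *ᵥ d) := by
    rw [dotProduct_comm, dotProduct_mulVec, ← mulVec_transpose, hQ.eq, dotProduct_comm]
  simp only [affineSecondMoment, Matrix.mul_add, Matrix.mul_smul, mul_vecMulVec, trace_add,
    trace_smul, trace_vecMulVec, smul_eq_mul, hxd]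
  rw [dotProduct_comm (Q *ᵥ d) d, dotProduct_comm (Q *ᵥ d) x]
  ring

end AffineMoment

section Relaxations

variable {n m : ℕ} {a : Fin m → Fin n → ℝ} {b : Fin m → ℝ}

lemma affineSecondMoment_inv_two_apply (x : Fin n → ℝ) (X : Matrix (Fin n) (Fin n) ℝ)
    (i j : Fin n) :
    affineSecondMoment ((2⁻¹ : ℝ) • allOnes n) (-2⁻¹) x X i j = (1 - x i - x j + X i j) / 4 := by
  simp only [affineSecondMoment_apply, Pi.smul_apply, smul_eq_mul, allOnes]
  ring

lemma affineSecondMoment_neg_two_apply (z : Fin n → ℝ) (Z : Matrix (Fin n) (Fin n) ℝ)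
    (i j : Fin n) :
    affineSecondMoment (allOnes n) (-2) z Z i j = 1 - 2 * z i - 2 * z j + 4 * Z i j := by
  simp only [affineSecondMoment_apply, allOnes]
  ring

lemma feasDNNP_of_feasSDR2 {x : Fin n → ℝ} {X : Matrix (Fin n) (Fin n) ℝ} (hX : X.IsSymm)
    (h : FeasSDR2 a b x X) :
    FeasDNNP a b ((2⁻¹ : ℝ) • allOnes n + (-2⁻¹ : ℝ) • x)
      (affineSecondMoment ((2⁻¹ : ℝ) • allOnes n) (-2⁻¹) x X) := by
  obtain ⟨hlin, hquad, hdiag, hnonneg, hpsd⟩ := h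
  have hlin_dnnp (i : Fin m) :
      2 * (a i ⬝ᵥ ((2⁻¹ : ℝ) • allOnes n + (-2⁻¹ : ℝ) • x)) = a i ⬝ᵥ allOnes n - b i := by
    simp only [dotProduct_add, dotProduct_smul, smul_eq_mul, hlin]
    ring
  have hx (i : Fin n) : x i ≤ 1 := by
    linarith [hnonneg i i le_rfl, hdiag i]
  refine ⟨hlin_dnnp, fun i => ?_, fun i => ?_, hpsd.momentMatrix_affine _ _, ?_⟩
  · have hvar :=
      dotProduct_affineSecondMoment_mulVec_sub_sq (a i) ((2⁻¹ : ℝ) • allOnes n) (-2⁻¹) x X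
    rw [hquad i, hlin i, sub_self, mul_zero, sub_eq_zero] at hvar
    rw [hvar, ← hlin_dnnp i]
    ring
  · simp only [affineSecondMoment_inv_two_apply, hdiag, Pi.add_apply, Pi.smul_apply, smul_eq_mul,
      allOnes]
    ring
  · rintro (_ | i) (_ | j)
    · simp
    · simp only [fromBlocks_apply₁₂, replicateRow_apply, Pi.add_apply, Pi.smul_apply, smul_eq_mul,
        allOnes]
      linarith [hx j]
    · simp only [fromBlocks_apply₂₁, replicateCol_apply, Pi.add_apply, Pi.smul_apply, smul_eq_mul,
        allOnes]
      linarith [hx i]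
    · rw [fromBlocks_apply₂₂, affineSecondMoment_inv_two_apply]
      rcases le_total i j with hij | hij
      · linarith [hnonneg i j hij]
      · linarith [hnonneg j i hij, hX.apply i j]

lemma feasSDR2_of_feasDNNP {z : Fin n → ℝ} {Z : Matrix (Fin n) (Fin n) ℝ}
    (h : FeasDNNP a b z Z) :
    FeasSDR2 a b (allOnes n + (-2 : ℝ) • z) (affineSecondMoment (allOnes n) (-2) z Z) := by
  obtain ⟨hlin, hquad, hdiag, hpsd, hnonneg⟩ := h
  have hlin_sdr2 (i : Fin m) : a i ⬝ᵥ (allOnes n + (-2 : ℝ) • z) = b i := by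
    simp only [dotProduct_add, dotProduct_smul, smul_eq_mul]
    linarith [hlin i]
  refine ⟨hlin_sdr2, fun i => ?_, fun i => ?_, fun i j _ => ?_, hpsd.momentMatrix_affine _ _⟩
  · have hvar := dotProduct_affineSecondMoment_mulVec_sub_sq (a i) (allOnes n) (-2) z Z
    rw [hlin_sdr2 i] at hvar
    linear_combination hvar + hquad i - (a i ⬝ᵥ allOnes n - b i + 2 * (a i ⬝ᵥ z)) * hlin i
  · rw [affineSecondMoment_neg_two_apply, hdiag]
    ring
  · have hZij := hnonneg (Sum.inr i) (Sum.inr j)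
    simp only [fromBlocks_apply₂₂] at hZij
    simp only [affineSecondMoment_neg_two_apply, Pi.add_apply, Pi.smul_apply, smul_eq_mul, allOnes]
    linarith

lemma affineSecondMoment_inv_two_neg_two (z : Fin n → ℝ) (Z : Matrix (Fin n) (Fin n) ℝ) :
    affineSecondMoment ((2⁻¹ : ℝ) • allOnes n) (-2⁻¹) (allOnes n + (-2 : ℝ) • z)
      (affineSecondMoment (allOnes n) (-2) z Z) = Z := by
  ext i j
  simp only [affineSecondMoment_inv_two_apply, affineSecondMoment_neg_two_apply, Pi.add_apply,
    Pi.smul_apply, smul_eq_mul, allOnes]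
  ring

lemma inv_two_smul_allOnes_add_neg_two (z : Fin n → ℝ) :
    (2⁻¹ : ℝ) • allOnes n + (-2⁻¹ : ℝ) • (allOnes n + (-2 : ℝ) • z) = z := by
  ext i
  simp only [Pi.add_apply, Pi.smul_apply, smul_eq_mul, allOnes]
  ring

lemma objDNNP_affine_eq_objSDR2 (Q : Matrix (Fin n) (Fin n) ℝ) (hQ : Q.IsSymm) (c x : Fin n → ℝ)
    (X : Matrix (Fin n) (Fin n) ℝ) :
    4 * (Q * affineSecondMoment ((2⁻¹ : ℝ) • allOnes n) (-2⁻¹) x X).trace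
        - 4 * (((2⁻¹ : ℝ) • allOnes n + (-2⁻¹ : ℝ) • x) ⬝ᵥ (Q.mulVec (allOnes n) + c))
        + allOnes n ⬝ᵥ Q.mulVec (allOnes n) + 2 * (c ⬝ᵥ allOnes n) =
      (Q * X).trace + 2 * (c ⬝ᵥ x) := by
  rw [trace_mul_affineSecondMoment hQ]
  simp only [mulVec_smul, dotProduct_smul, smul_dotProduct, dotProduct_add, add_dotProduct,
    smul_eq_mul, dotProduct_comm c]
  ring

end Relaxations

theorem opt_SDR2_eq_opt_DNNP_general {n m : ℕ}
    (Q : Matrix (Fin n) (Fin n) ℝ) (hQ : Q.IsSymm) (c : Fin n → ℝ)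
    (a : Fin m → Fin n → ℝ) (b : Fin m → ℝ) :
    sInf {v : ℝ | ∃ x X, X.IsSymm ∧ FeasSDR2 a b x X ∧
          v = (Q * X).trace + 2 * (c ⬝ᵥ x)} =
      sInf {v : ℝ | ∃ z Z, Z.IsSymm ∧ FeasDNNP a b z Z ∧
          v = 4 * (Q * Z).trace - 4 * (z ⬝ᵥ (Q.mulVec (allOnes n) + c))
              + allOnes n ⬝ᵥ Q.mulVec (allOnes n) + 2 * (c ⬝ᵥ allOnes n)} := by
  congr 1
  ext v
  constructor
  · rintro ⟨x, X, hX, h, rfl⟩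
    exact ⟨_, _, hX.affineSecondMoment _ _ _, feasDNNP_of_feasSDR2 hX h,
      (objDNNP_affine_eq_objSDR2 Q hQ c x X).symm⟩
  · rintro ⟨z, Z, hZ, h, rfl⟩
    refine ⟨_, _, hZ.affineSecondMoment _ _ _, feasSDR2_of_feasDNNP h, ?_⟩
    have hobj := objDNNP_affine_eq_objSDR2 Q hQ c (allOnes n + (-2 : ℝ) • z)
      (affineSecondMoment (allOnes n) (-2) z Z)
    rwa [inv_two_smul_allOnes_add_neg_two, affineSecondMoment_inv_two_neg_two] at hobj

theorem opt_SDR2_eq_opt_DNNP {n m : ℕ}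
    (Q : Matrix (Fin n) (Fin n) ℝ) (hQ : Q.IsSymm) (c : Fin n → ℝ)
    (a : Fin m → Fin n → ℝ) (b : Fin m → ℝ)
    (hfeas1 : ∃ x X, X.IsSymm ∧ FeasSDR2 a b x X)
    (hfeas2 : ∃ z Z, Z.IsSymm ∧ FeasDNNP a b z Z) :
    sInf {v : ℝ | ∃ x X, X.IsSymm ∧ FeasSDR2 a b x X ∧
          v = (Q * X).trace + 2 * (c ⬝ᵥ x)} =
      sInf {v : ℝ | ∃ z Z, Z.IsSymm ∧ FeasDNNP a b z Z ∧
          v = 4 * (Q * Z).trace - 4 * (z ⬝ᵥ (Q.mulVec (allOnes n) + c))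
              + allOnes n ⬝ᵥ Q.mulVec (allOnes n) + 2 * (c ⬝ᵥ allOnes n)} :=
  opt_SDR2_eq_opt_DNNP_general Q hQ c a b
end

section
/- For the max-cut problem, the optimal value of the doubly nonnegative relaxation equals the optimal value of the standard semidefinite relaxation: sup{ (1/4) L•U : U ⪰ 0, U_{ii} = 1 ∀i } = sup{ L•X - xᵀLe + (1/4)eᵀLe : X_{ii} = x_i ∀i, [[1, xᵀ],[x, X]] ⪰ 0 and entrywise nonnegative }. -/
open Matrix

/-!
The two relaxations have the same set of objective values, not only the same supremum.
By the Schur complement, `[[1, xᵀ], [x, X]] ⪰ 0` iff `X - xxᵀ ⪰ 0`. A feasible `U` is sent to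
`x = e/2`, `X = (U + eeᵀ)/4`, whose Schur complement is `U/4`; its entries `(1 + U_ij)/4` are
nonnegative because `U_ii + 2 U_ij + U_jj ≥ 0`. Conversely `(x, X)` is sent to
`U = 4(X - xxᵀ) + (2x - e)(2x - e)ᵀ ⪰ 0`, whose diagonal is `1` exactly because `X_ii = x_i`.
Both maps preserve the objective, the second one because `eᵀLx = xᵀLe` for symmetric `L`.
-/

namespace Matrix

variable {ι : Type*} [Fintype ι]

theorem PosSemidef.diag_add_two_mul_apply_add_diag_nonneg {U : Matrix ι ι ℝ}
    (hU : U.PosSemidef) (i j : ι) : 0 ≤ U i i + 2 * U i j + U j j := by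
  classical
  have h := hU.dotProduct_mulVec_nonneg (Pi.single i 1 + Pi.single j 1)
  simp only [star_trivial, mulVec_add, mulVec_single, dotProduct_add, add_dotProduct,
    single_dotProduct, one_mul, MulOpposite.op_one, one_smul, col_apply] at h
  have hji : U j i = U i j := hU.isHermitian.apply i j
  linarith

theorem fromBlocks_one_replicateRow_replicateCol_posSemidef_iff (x : ι → ℝ)
    (X : Matrix ι ι ℝ) :
    (fromBlocks 1 (replicateRow Unit x) (replicateCol Unit x) X).PosSemidef ↔
      (X - vecMulVec x x).PosSemidef := by
  have : Invertible (1 : Matrix Unit Unit ℝ) := invertibleOne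
  have := PosDef.fromBlocks₁₁ (replicateRow Unit x) X (PosDef.one (n := Unit) (R := ℝ))
  rwa [conjTranspose_replicateRow, star_trivial, inv_one, Matrix.mul_one,
    ← vecMulVec_eq] at this

end Matrix

namespace MaxCut

variable {ι : Type*}

noncomputable def lift (e : ι → ℝ) (U : Matrix ι ι ℝ) : Matrix ι ι ℝ :=
  (1 / 4 : ℝ) • (U + vecMulVec e e)

/-- This is `4X - 2xeᵀ - 2exᵀ + eeᵀ`, written so that positive semidefiniteness is visible. -/
def unlift (e x : ι → ℝ) (X : Matrix ι ι ℝ) : Matrix ι ι ℝ :=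
  (4 : ℝ) • (X - vecMulVec x x) + vecMulVec (2 • x - e) (2 • x - e)

theorem lift_apply_self {U : Matrix ι ι ℝ} {i : ι} (hi : U i i = 1) :
    lift 1 U i i = ((1 / 2 : ℝ) • (1 : ι → ℝ)) i := by
  norm_num [lift, hi]

theorem unlift_apply_self {x : ι → ℝ} {X : Matrix ι ι ℝ} {i : ι} (hi : X i i = x i) :
    unlift 1 x X i i = 1 := by
  simp only [unlift, Matrix.add_apply, Matrix.smul_apply, Matrix.sub_apply, vecMulVec_apply,
    Pi.sub_apply, Pi.smul_apply, Pi.one_apply, hi, smul_eq_mul]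
  ring

variable [Fintype ι]

theorem trace_mul_lift (L U : Matrix ι ι ℝ) (e : ι → ℝ) :
    (L * lift e U).trace - ((1 / 2 : ℝ) • e) ⬝ᵥ L *ᵥ e + 1 / 4 * (e ⬝ᵥ L *ᵥ e) =
      1 / 4 * (L * U).trace := by
  rw [lift, Matrix.mul_smul, mul_add, trace_smul, trace_add, mul_vecMulVec, trace_vecMulVec,
    smul_dotProduct, dotProduct_comm (L *ᵥ e)]
  simp only [smul_eq_mul]
  ring

theorem trace_mul_unlift {L : Matrix ι ι ℝ} (hL : L.IsSymm) (e x : ι → ℝ) (X : Matrix ι ι ℝ) :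
    1 / 4 * (L * unlift e x X).trace = (L * X).trace - x ⬝ᵥ L *ᵥ e + 1 / 4 * (e ⬝ᵥ L *ᵥ e) := by
  have hcomm (a b : ι → ℝ) : (L *ᵥ a) ⬝ᵥ b = b ⬝ᵥ L *ᵥ a := dotProduct_comm _ _
  have hsymm : e ⬝ᵥ L *ᵥ x = x ⬝ᵥ L *ᵥ e := by
    rw [dotProduct_mulVec, ← mulVec_transpose, hL.eq, dotProduct_comm]
  simp only [unlift, mul_add, Matrix.mul_smul, mul_sub, trace_add, trace_smul, trace_sub,
    mul_vecMulVec, trace_vecMulVec, hcomm, mulVec_sub, mulVec_smul, dotProduct_sub,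
    sub_dotProduct, dotProduct_smul, smul_dotProduct, hsymm, smul_eq_mul]
  ring

theorem fromBlocks_lift_posSemidef {U : Matrix ι ι ℝ} (hU : U.PosSemidef) (e : ι → ℝ) :
    (fromBlocks 1 (replicateRow Unit ((1 / 2 : ℝ) • e)) (replicateCol Unit ((1 / 2 : ℝ) • e))
      (lift e U)).PosSemidef := by
  rw [fromBlocks_one_replicateRow_replicateCol_posSemidef_iff, lift, smul_vecMulVec,
    vecMulVec_smul, smul_smul, smul_add, add_sub_assoc,
    show (1 / 2 : ℝ) * (1 / 2) = 1 / 4 by norm_num, sub_self, add_zero]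
  exact hU.smul (by norm_num)

theorem fromBlocks_lift_nonneg {U : Matrix ι ι ℝ} (hU : U.PosSemidef) (hdiag : ∀ i, U i i = 1) :
    ∀ p q, 0 ≤ fromBlocks (1 : Matrix Unit Unit ℝ) (replicateRow Unit ((1 / 2 : ℝ) • 1))
      (replicateCol Unit ((1 / 2 : ℝ) • 1)) (lift 1 U) p q := by
  rintro (⟨⟩ | i) (⟨⟩ | j)
  · simp
  · simp
  · simp
  · have hij := hU.diag_add_two_mul_apply_add_diag_nonneg i j
    rw [hdiag, hdiag] at hij
    simp only [fromBlocks_apply₂₂, lift, Matrix.smul_apply, Matrix.add_apply, vecMulVec_apply,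
      Pi.one_apply, smul_eq_mul]
    linarith

theorem unlift_posSemidef {x : ι → ℝ} {X : Matrix ι ι ℝ}
    (hX : (fromBlocks 1 (replicateRow Unit x) (replicateCol Unit x) X).PosSemidef)
    (e : ι → ℝ) : (unlift e x X).PosSemidef := by
  rw [fromBlocks_one_replicateRow_replicateCol_posSemidef_iff] at hX
  exact (hX.smul (by norm_num)).add (posSemidef_vecMulVec_self_star _)

end MaxCut

open MaxCut in
theorem maxcut_DNNP_eq_SDR {n : ℕ} (L : Matrix (Fin n) (Fin n) ℝ) (hL : L.IsSymm) :
    sSup {v : ℝ | ∃ U : Matrix (Fin n) (Fin n) ℝ, U.PosSemidef ∧ (∀ i, U i i = 1) ∧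
          v = (1 / 4 : ℝ) * (L * U).trace} =
      sSup {v : ℝ | ∃ (x : Fin n → ℝ) (X : Matrix (Fin n) (Fin n) ℝ),
          (∀ i, X i i = x i) ∧
          (fromBlocks (1 : Matrix Unit Unit ℝ) (replicateRow Unit x) (replicateCol Unit x) X).PosSemidef ∧
          (∀ p q, 0 ≤ fromBlocks (1 : Matrix Unit Unit ℝ) (replicateRow Unit x) (replicateCol Unit x) X p q) ∧
          v = (L * X).trace - x ⬝ᵥ L.mulVec (allOnes n)
              + (1 / 4 : ℝ) * (allOnes n ⬝ᵥ L.mulVec (allOnes n))} := by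
  congr 1
  ext v
  constructor
  · rintro ⟨U, hU, hdiag, rfl⟩
    exact ⟨(1 / 2 : ℝ) • allOnes n, lift (allOnes n) U, fun i => lift_apply_self (hdiag i),
      fromBlocks_lift_posSemidef hU _, fromBlocks_lift_nonneg hU hdiag,
      (trace_mul_lift L U _).symm⟩
  · rintro ⟨x, X, hdiag, hpsd, -, rfl⟩
    exact ⟨unlift (allOnes n) x X, unlift_posSemidef hpsd _, fun i => unlift_apply_self (hdiag i),
      (trace_mul_unlift hL _ x X).symm⟩
end
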